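/- Let X be a compact smooth manifold and let E → X be a smooth real vector bundle with total space Tot(E), and let z : X → Tot(E) denote the zero section (a smooth map). Say that a smooth section u : X → Tot(E) is transverse to the zero section if for every point p ∈ X with u(p) = 0_p (the zero vector of the fiber over p), the images of the differentials du_p : T_pX → T_{0_p}Tot(E) and dz_p : T_pX → T_{0_p}Tot(E) together span T_{0_p}Tot(E). Then for any finite list s₁, …, s_d of smooth sections of E, the set { c ∈ ℝᵈ : the section c₁s₁ + ⋯ + c_d s_d is transverse to the zero section } is an open subset of ℝᵈ. -/

import Mathlib

open Bundle Manifold Function Set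

theorem isOpen_surjective_clm {E F : Type*} [NormedAddCommGroup E] [NormedSpace ℝ E]
    [NormedAddCommGroup F] [NormedSpace ℝ F] [FiniteDimensional ℝ E] [FiniteDimensional ℝ F] :
    IsOpen {A : E →L[ℝ] F | Function.Surjective A} := by
  rw [isOpen_iff_mem_nhds]
  rintro A (hA : Surjective A)
  obtain ⟨σ, hσ⟩ := (A : E →ₗ[ℝ] F).exists_rightInverse_of_surjective
    (LinearMap.range_eq_top.2 hA)
  set σL := LinearMap.toContinuousLinearMap σ with hσL
  have hcont : Continuous fun B : E →L[ℝ] F => B.comp σL :=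
    continuous_id.clm_comp continuous_const
  have hopen : IsOpen {B : E →L[ℝ] F | IsUnit (B.comp σL)} :=
    Units.isOpen.preimage hcont
  refine Filter.mem_of_superset (hopen.mem_nhds ?_) ?_
  · have : A.comp σL = (1 : F →L[ℝ] F) := by
      ext y
      have := LinearMap.congr_fun hσ y
      simpa [σL] using this
    simp [Set.mem_setOf_eq, this]
  · rintro B hB
    obtain ⟨u, hu⟩ := hB
    intro y
    refine ⟨σL ((↑u⁻¹ : F →L[ℝ] F) y), ?_⟩
    have h1 : B (σL ((↑u⁻¹ : F →L[ℝ] F) y)) = (B.comp σL) ((↑u⁻¹ : F →L[ℝ] F) y) := rfl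
    rw [h1, ← hu]
    calc (↑u : F →L[ℝ] F) ((↑u⁻¹ : F →L[ℝ] F) y) = (↑u * ↑u⁻¹ : F →L[ℝ] F) y := rfl
      _ = y := by rw [Units.mul_inv]; rfl

/-- Let `X` be a compact smooth manifold and `E → X` a smooth real vector
bundle with finite-dimensional fibers.  A smooth section `u` is transverse to the zero section
if, at every point `p` where `u p = 0`, the ranges of the differentials of `u` and of the zero
section at `p` together span the tangent space of the total space at the zero vector over `p`.
Then for any finite list `s₁, …, s_d` of smooth sections, the set of coefficient vectors
`c ∈ ℝᵈ` for which `c₁ s₁ + ⋯ + c_d s_d` is transverse to the zero section is open. -/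
theorem isOpen_transverse_combinations
    {EM : Type*} [NormedAddCommGroup EM] [NormedSpace ℝ EM] [FiniteDimensional ℝ EM]
    {H : Type*} [TopologicalSpace H] (I : ModelWithCorners ℝ EM H)
    {X : Type*} [TopologicalSpace X] [T2Space X] [ChartedSpace H X]
    [IsManifold I (⊤ : ℕ∞) X] [CompactSpace X]
    {F : Type*} [NormedAddCommGroup F] [NormedSpace ℝ F] [FiniteDimensional ℝ F]
    (E : X → Type*) [∀ x, AddCommGroup (E x)] [∀ x, Module ℝ (E x)]
    [TopologicalSpace (TotalSpace F E)] [∀ x, TopologicalSpace (E x)]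
    [FiberBundle F E] [VectorBundle ℝ F E] [ContMDiffVectorBundle (⊤ : ℕ∞) F E I]
    (d : ℕ) (s : Fin d → ∀ x, E x)
    (hs : ∀ i, ContMDiff I (I.prod 𝓘(ℝ, F)) (⊤ : ℕ∞) (fun x => TotalSpace.mk' F x (s i x))) :
    IsOpen {c : Fin d → ℝ |
      ∀ p : X, (∑ i, c i • s i p) = 0 →
        LinearMap.range
            (mfderiv I (I.prod 𝓘(ℝ, F)) (fun x => TotalSpace.mk' F x (∑ i, c i • s i x)) p).toLinearMap ⊔
          LinearMap.range
            (mfderiv I (I.prod 𝓘(ℝ, F)) (fun x => TotalSpace.mk' F x (0 : E x)) p).toLinearMap = ⊤} := by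
  classical
  -- the combination map, jointly in coefficients and base point
  set U : ((Fin d → ℝ) × X) → TotalSpace F E :=
    fun q => TotalSpace.mk' F q.2 (∑ i, q.1 i • s i q.2) with hUdef
  have hU : ContMDiff (𝓘(ℝ, Fin d → ℝ).prod I) (I.prod 𝓘(ℝ, F)) (⊤ : ℕ∞) U := by
    intro q₀
    rw [Bundle.contMDiffAt_totalSpace]
    refine ⟨contMDiffAt_snd, ?_⟩
    have hq₀proj : (U q₀).proj = q₀.2 := rfl
    rw [hq₀proj]
    set e := trivializationAt F E q₀.2 with he
    have hsmooth : ContMDiffAt (𝓘(ℝ, Fin d → ℝ).prod I) 𝓘(ℝ, F) (⊤ : ℕ∞)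
        (fun q : (Fin d → ℝ) × X => ∑ i, q.1 i • (e ⟨q.2, s i q.2⟩).2) q₀ := by
      apply contMDiffAt_finset_sum
      intro i _
      have hsi : ContMDiffAt I 𝓘(ℝ, F) (⊤ : ℕ∞) (fun x => (e ⟨x, s i x⟩).2) q₀.2 := by
        have := (hs i) q₀.2
        rw [Bundle.contMDiffAt_section] at this
        exact this
      have hci : ContMDiffAt (𝓘(ℝ, Fin d → ℝ).prod I) 𝓘(ℝ, ℝ) (⊤ : ℕ∞)
          (fun q : (Fin d → ℝ) × X => q.1 i) q₀ :=
        ((ContinuousLinearMap.proj (R := ℝ) (φ := fun _ : Fin d => ℝ) i).contMDiff.comp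
          contMDiff_fst).contMDiffAt
      exact hci.smul (hsi.comp q₀ contMDiffAt_snd)
    refine hsmooth.congr_of_eventuallyEq ?_
    have hbase : {q : (Fin d → ℝ) × X | q.2 ∈ e.baseSet} ∈ nhds q₀ :=
      continuous_snd.continuousAt.preimage_mem_nhds
        (e.open_baseSet.mem_nhds (mem_baseSet_trivializationAt F E q₀.2))
    filter_upwards [hbase] with q hq
    have hlin : ∀ v : E q.2, (e ⟨q.2, v⟩).2 = e.continuousLinearEquivAt ℝ q.2 hq v := by
      intro v
      rw [e.apply_eq_prod_continuousLinearEquivAt ℝ q.2 hq v]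
    rw [hlin]
    simp only [map_sum, map_smul, hlin]
  -- derivative families
  set Du : ((Fin d → ℝ) × X) → EM →L[ℝ] EM × F :=
    fun q => mfderiv I (I.prod 𝓘(ℝ, F)) (fun x => TotalSpace.mk' F x (∑ i, q.1 i • s i x)) q.2
    with hDudef
  set Dz : ((Fin d → ℝ) × X) → EM →L[ℝ] EM × F :=
    fun q => mfderiv I (I.prod 𝓘(ℝ, F)) (fun x => TotalSpace.mk' F x (0 : E x)) q.2 with hDzdef
  set P : ((Fin d → ℝ) × X) → Prop :=
    fun q => (∑ i, q.1 i • s i q.2) = 0 →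
      LinearMap.range (Du q).toLinearMap ⊔ LinearMap.range (Dz q).toLinearMap = ⊤ with hPdef
  have key2 : ∀ q₀ : (Fin d → ℝ) × X, (∑ i, q₀.1 i • s i q₀.2) ≠ 0 →
      ∀ᶠ q in nhds q₀, (∑ i, q.1 i • s i q.2) ≠ 0 := by
    intro q₀ hv₀
    set e := trivializationAt F E q₀.2 with he
    have hb₀ : q₀.2 ∈ e.baseSet := mem_baseSet_trivializationAt F E q₀.2
    have hcont : ContinuousAt (fun q : (Fin d → ℝ) × X => (e (U q)).2) q₀ := by
      have := hU q₀
      rw [Bundle.contMDiffAt_totalSpace] at this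
      exact this.2.continuousAt
    have hval : (e (U q₀)).2 ≠ 0 := by
      have h1 : (e (U q₀)).2
          = e.continuousLinearEquivAt ℝ q₀.2 hb₀ (∑ i, q₀.1 i • s i q₀.2) := by
        rw [e.apply_eq_prod_continuousLinearEquivAt ℝ q₀.2 hb₀]
      rw [h1]
      exact fun h => hv₀ ((e.continuousLinearEquivAt ℝ q₀.2 hb₀).map_eq_zero_iff.mp h)
    have hne : ∀ᶠ q in nhds q₀, (e (U q)).2 ≠ 0 := hcont.eventually_ne hval
    have hbase : ∀ᶠ q in nhds q₀, q.2 ∈ e.baseSet :=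
      continuous_snd.continuousAt.preimage_mem_nhds (e.open_baseSet.mem_nhds hb₀)
    filter_upwards [hne, hbase] with q h1 h2
    intro hzero
    apply h1
    have hU0 : U q = TotalSpace.mk' F q.2 (0 : E q.2) := by
      show TotalSpace.mk' F q.2 (∑ i, q.1 i • s i q.2) = _
      rw [hzero]
    rw [hU0]
    exact congrArg Prod.snd (e.zeroSection ℝ h2)
  have key : ∀ q₀ : (Fin d → ℝ) × X, (∑ i, q₀.1 i • s i q₀.2) = 0 →
      LinearMap.range (Du q₀).toLinearMap ⊔ LinearMap.range (Dz q₀).toLinearMap = ⊤ →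
      ∀ᶠ q in nhds q₀, P q := by
    intro q₀ h0 hspan
    have hUq₀ : U q₀ = TotalSpace.mk' F q₀.2 (0 : E q₀.2) := by
      show TotalSpace.mk' F q₀.2 (∑ i, q₀.1 i • s i q₀.2) = _
      rw [h0]
    -- joint smoothness of the two parametrized families
    have hfU : ContMDiffAt ((𝓘(ℝ, Fin d → ℝ).prod I).prod I) (I.prod 𝓘(ℝ, F)) (⊤ : ℕ∞)
        (Function.uncurry fun (q : (Fin d → ℝ) × X) (x : X) =>
          TotalSpace.mk' F x (∑ i, q.1 i • s i x)) (q₀, q₀.2) := by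
      have heq : (Function.uncurry fun (q : (Fin d → ℝ) × X) (x : X) =>
            TotalSpace.mk' F x (∑ i, q.1 i • s i x))
          = U ∘ (fun w : ((Fin d → ℝ) × X) × X => (w.1.1, w.2)) := rfl
      rw [heq]
      exact (hU.comp ((contMDiff_fst.comp contMDiff_fst).prodMk contMDiff_snd)).contMDiffAt
    have hfZ : ContMDiffAt ((𝓘(ℝ, Fin d → ℝ).prod I).prod I) (I.prod 𝓘(ℝ, F)) (⊤ : ℕ∞)
        (Function.uncurry fun (_ : (Fin d → ℝ) × X) (x : X) =>
          TotalSpace.mk' F x (0 : E x)) (q₀, q₀.2) :=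
      ((contMDiff_zeroSection ℝ E).comp contMDiff_snd).contMDiffAt
    -- parametrized derivatives, read in coordinates, are continuous
    have hdu : ContMDiffAt (𝓘(ℝ, Fin d → ℝ).prod I) 𝓘(ℝ, EM →L[ℝ] EM × F) (⊤ : ℕ∞)
        (inTangentCoordinates I (I.prod 𝓘(ℝ, F)) Prod.snd U Du q₀) q₀ :=
      ContMDiffAt.mfderiv
        (fun (q : (Fin d → ℝ) × X) (x : X) => TotalSpace.mk' F x (∑ i, q.1 i • s i x))
        Prod.snd hfU contMDiffAt_snd (by exact_mod_cast le_top)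
    have hdz : ContMDiffAt (𝓘(ℝ, Fin d → ℝ).prod I) 𝓘(ℝ, EM →L[ℝ] EM × F) (⊤ : ℕ∞)
        (inTangentCoordinates I (I.prod 𝓘(ℝ, F)) Prod.snd
          (fun q : (Fin d → ℝ) × X => TotalSpace.mk' F q.2 (0 : E q.2)) Dz q₀) q₀ :=
      ContMDiffAt.mfderiv
        (fun (_ : (Fin d → ℝ) × X) (x : X) => TotalSpace.mk' F x (0 : E x))
        Prod.snd hfZ contMDiffAt_snd (by exact_mod_cast le_top)
    -- surjectivity of the coproduct is an open condition
    have hS : IsOpen {A : (EM →L[ℝ] EM × F) × (EM →L[ℝ] EM × F) |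
        Function.Surjective (A.1.coprod A.2)} := by
      have hrepr : (fun A : (EM →L[ℝ] EM × F) × (EM →L[ℝ] EM × F) => A.1.coprod A.2)
          = fun A => A.1.comp (ContinuousLinearMap.fst ℝ EM EM)
              + A.2.comp (ContinuousLinearMap.snd ℝ EM EM) := by
        funext A
        apply ContinuousLinearMap.ext
        intro v
        simp
      have hcont : Continuous
          (fun A : (EM →L[ℝ] EM × F) × (EM →L[ℝ] EM × F) => A.1.coprod A.2) := by
        rw [hrepr]
        exact (continuous_fst.clm_comp continuous_const).add
          (continuous_snd.clm_comp continuous_const)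
      exact isOpen_surjective_clm.preimage hcont
    -- value of the coordinate representations at the base point
    have hΦu₀ : inTangentCoordinates I (I.prod 𝓘(ℝ, F)) Prod.snd U Du q₀ q₀ = Du q₀ := by
      rw [inTangentCoordinates_eq Prod.snd U Du (mem_chart_source H q₀.2)
        (mem_chart_source _ (U q₀))]
      apply ContinuousLinearMap.ext
      intro v
      simp only [ContinuousLinearMap.comp_apply]
      rw [(tangentBundleCore I X).coordChange_self (achart H q₀.2) q₀.2
        (mem_chart_source H q₀.2) v]
      rw [(tangentBundleCore (I.prod 𝓘(ℝ, F)) (TotalSpace F E)).coordChange_self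
        (achart (ModelProd H F) (U q₀)) (U q₀) (mem_chart_source _ (U q₀)) (Du q₀ v)]
    have hΦz₀ : inTangentCoordinates I (I.prod 𝓘(ℝ, F)) Prod.snd
        (fun q : (Fin d → ℝ) × X => TotalSpace.mk' F q.2 (0 : E q.2)) Dz q₀ q₀ = Dz q₀ := by
      rw [inTangentCoordinates_eq Prod.snd
        (fun q : (Fin d → ℝ) × X => TotalSpace.mk' F q.2 (0 : E q.2)) Dz
        (mem_chart_source H q₀.2) (mem_chart_source _ (TotalSpace.mk' F q₀.2 (0 : E q₀.2)))]
      apply ContinuousLinearMap.ext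
      intro v
      simp only [ContinuousLinearMap.comp_apply]
      rw [(tangentBundleCore I X).coordChange_self (achart H q₀.2) q₀.2
        (mem_chart_source H q₀.2) v]
      rw [(tangentBundleCore (I.prod 𝓘(ℝ, F)) (TotalSpace F E)).coordChange_self
        (achart (ModelProd H F) (TotalSpace.mk' F q₀.2 (0 : E q₀.2)))
        (TotalSpace.mk' F q₀.2 (0 : E q₀.2))
        (mem_chart_source _ (TotalSpace.mk' F q₀.2 (0 : E q₀.2))) (Dz q₀ v)]
    -- the coordinate representations lie in the open set at the base point
    have hsurj₀ : (inTangentCoordinates I (I.prod 𝓘(ℝ, F)) Prod.snd U Du q₀ q₀,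
        inTangentCoordinates I (I.prod 𝓘(ℝ, F)) Prod.snd
          (fun q : (Fin d → ℝ) × X => TotalSpace.mk' F q.2 (0 : E q.2)) Dz q₀ q₀)
        ∈ {A : (EM →L[ℝ] EM × F) × (EM →L[ℝ] EM × F) |
            Function.Surjective (A.1.coprod A.2)} := by
      rw [Set.mem_setOf_eq, hΦu₀, hΦz₀]
      have hr : LinearMap.range ((Du q₀).coprod (Dz q₀)).toLinearMap = ⊤ := by
        rw [ContinuousLinearMap.range_coprod]
        exact hspan
      exact LinearMap.range_eq_top.mp hr
    have hev4 : ∀ᶠ q in nhds q₀, Function.Surjective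
        ((inTangentCoordinates I (I.prod 𝓘(ℝ, F)) Prod.snd U Du q₀ q).coprod
          (inTangentCoordinates I (I.prod 𝓘(ℝ, F)) Prod.snd
            (fun q : (Fin d → ℝ) × X => TotalSpace.mk' F q.2 (0 : E q.2)) Dz q₀ q)) := by
      have hpair : ContinuousAt (fun q =>
          (inTangentCoordinates I (I.prod 𝓘(ℝ, F)) Prod.snd U Du q₀ q,
            inTangentCoordinates I (I.prod 𝓘(ℝ, F)) Prod.snd
              (fun q : (Fin d → ℝ) × X => TotalSpace.mk' F q.2 (0 : E q.2)) Dz q₀ q)) q₀ :=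
        hdu.continuousAt.prodMk hdz.continuousAt
      filter_upwards [hpair.preimage_mem_nhds (hS.mem_nhds hsurj₀)] with q hq using hq
    -- eventual chart memberships
    have hev1 : ∀ᶠ q in nhds q₀, q.2 ∈ (chartAt H q₀.2).source :=
      continuous_snd.continuousAt.preimage_mem_nhds
        ((chartAt H q₀.2).open_source.mem_nhds (mem_chart_source H q₀.2))
    have hev2 : ∀ᶠ q in nhds q₀, U q ∈ (chartAt (ModelProd H F) (U q₀)).source :=
      (hU q₀).continuousAt.preimage_mem_nhds
        ((chartAt _ (U q₀)).open_source.mem_nhds (mem_chart_source _ (U q₀)))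
    have hev3 : ∀ᶠ q in nhds q₀, (TotalSpace.mk' F q.2 (0 : E q.2))
        ∈ (chartAt (ModelProd H F) (TotalSpace.mk' F q₀.2 (0 : E q₀.2))).source := by
      have hz0 : ContMDiff (𝓘(ℝ, Fin d → ℝ).prod I) (I.prod 𝓘(ℝ, F)) (⊤ : ℕ∞)
          (fun q : (Fin d → ℝ) × X => TotalSpace.mk' F q.2 (0 : E q.2)) :=
        (contMDiff_zeroSection ℝ E).comp contMDiff_snd
      have hz : Continuous (fun q : (Fin d → ℝ) × X => TotalSpace.mk' F q.2 (0 : E q.2)) :=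
        hz0.continuous
      exact hz.continuousAt.preimage_mem_nhds
        ((chartAt _ _).open_source.mem_nhds (mem_chart_source _ _))
    -- conclusion
    filter_upwards [hev1, hev2, hev3, hev4] with q h1 h2 h3 h4
    intro hq
    have hUq : U q = TotalSpace.mk' F q.2 (0 : E q.2) := by
      show TotalSpace.mk' F q.2 (∑ i, q.1 i • s i q.2) = _
      rw [hq]
    rw [inTangentCoordinates_eq Prod.snd U Du h1 h2,
      inTangentCoordinates_eq Prod.snd
        (fun q : (Fin d → ℝ) × X => TotalSpace.mk' F q.2 (0 : E q.2)) Dz h1 h3,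
      hUq, hUq₀] at h4
    set C := (tangentBundleCore (I.prod 𝓘(ℝ, F)) (TotalSpace F E)).coordChange
      (achart (ModelProd H F) (TotalSpace.mk' F q.2 (0 : E q.2)))
      (achart (ModelProd H F) (TotalSpace.mk' F q₀.2 (0 : E q₀.2)))
      (TotalSpace.mk' F q.2 (0 : E q.2)) with hCdef
    set Cin := (tangentBundleCore I X).coordChange (achart H q₀.2) (achart H q.2) q.2
      with hCindef
    -- memberships for the base sets
    have hmem1 : TotalSpace.mk' F q.2 (0 : E q.2)
        ∈ (tangentBundleCore (I.prod 𝓘(ℝ, F)) (TotalSpace F E)).baseSet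
          (achart (ModelProd H F) (TotalSpace.mk' F q.2 (0 : E q.2))) :=
      mem_chart_source _ _
    have hmem2 : TotalSpace.mk' F q.2 (0 : E q.2)
        ∈ (tangentBundleCore (I.prod 𝓘(ℝ, F)) (TotalSpace F E)).baseSet
          (achart (ModelProd H F) (TotalSpace.mk' F q₀.2 (0 : E q₀.2))) := h3
    have hCinj : Function.Injective C := by
      intro v w hvw
      have h₁ := (tangentBundleCore (I.prod 𝓘(ℝ, F)) (TotalSpace F E)).coordChange_comp
        (achart (ModelProd H F) (TotalSpace.mk' F q.2 (0 : E q.2)))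
        (achart (ModelProd H F) (TotalSpace.mk' F q₀.2 (0 : E q₀.2)))
        (achart (ModelProd H F) (TotalSpace.mk' F q.2 (0 : E q.2)))
        (TotalSpace.mk' F q.2 (0 : E q.2)) ⟨⟨hmem1, hmem2⟩, hmem1⟩ v
      have h₂ := (tangentBundleCore (I.prod 𝓘(ℝ, F)) (TotalSpace F E)).coordChange_comp
        (achart (ModelProd H F) (TotalSpace.mk' F q.2 (0 : E q.2)))
        (achart (ModelProd H F) (TotalSpace.mk' F q₀.2 (0 : E q₀.2)))
        (achart (ModelProd H F) (TotalSpace.mk' F q.2 (0 : E q.2)))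
        (TotalSpace.mk' F q.2 (0 : E q.2)) ⟨⟨hmem1, hmem2⟩, hmem1⟩ w
      have h₃ := (tangentBundleCore (I.prod 𝓘(ℝ, F)) (TotalSpace F E)).coordChange_self
        (achart (ModelProd H F) (TotalSpace.mk' F q.2 (0 : E q.2)))
        (TotalSpace.mk' F q.2 (0 : E q.2)) hmem1 v
      have h₄ := (tangentBundleCore (I.prod 𝓘(ℝ, F)) (TotalSpace F E)).coordChange_self
        (achart (ModelProd H F) (TotalSpace.mk' F q.2 (0 : E q.2)))
        (TotalSpace.mk' F q.2 (0 : E q.2)) hmem1 w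
      calc v = (tangentBundleCore (I.prod 𝓘(ℝ, F)) (TotalSpace F E)).coordChange
            (achart (ModelProd H F) (TotalSpace.mk' F q₀.2 (0 : E q₀.2)))
            (achart (ModelProd H F) (TotalSpace.mk' F q.2 (0 : E q.2)))
            (TotalSpace.mk' F q.2 (0 : E q.2)) (C v) := by rw [← hCdef] at h₁; rw [h₁, h₃]
        _ = (tangentBundleCore (I.prod 𝓘(ℝ, F)) (TotalSpace F E)).coordChange
            (achart (ModelProd H F) (TotalSpace.mk' F q₀.2 (0 : E q₀.2)))
            (achart (ModelProd H F) (TotalSpace.mk' F q.2 (0 : E q.2)))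
            (TotalSpace.mk' F q.2 (0 : E q.2)) (C w) := by rw [hvw]
        _ = w := by rw [← hCdef] at h₂; rw [h₂, h₄]
    -- finish
    rw [← ContinuousLinearMap.range_coprod, LinearMap.range_eq_top]
    intro y
    obtain ⟨w, hw⟩ := h4 (C y)
    refine ⟨(Cin w.1, Cin w.2), ?_⟩
    apply hCinj
    have hw' : C ((Du q) (Cin w.1) + (Dz q) (Cin w.2)) = C y := by
      rw [map_add]
      simpa [ContinuousLinearMap.coprod_apply] using hw
    simpa [ContinuousLinearMap.coprod_apply] using hw'
  have hPopen : IsOpen {q | P q} := by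
    rw [isOpen_iff_mem_nhds]
    intro q₀ hq₀
    by_cases h0 : (∑ i, q₀.1 i • s i q₀.2) = 0
    · exact key q₀ h0 (hq₀ h0)
    · filter_upwards [key2 q₀ h0] with q hq
      exact fun h => absurd h hq
  have himage : {c : Fin d → ℝ |
      ∀ p : X, (∑ i, c i • s i p) = 0 →
        LinearMap.range
            (mfderiv I (I.prod 𝓘(ℝ, F)) (fun x => TotalSpace.mk' F x (∑ i, c i • s i x)) p).toLinearMap ⊔
          LinearMap.range
            (mfderiv I (I.prod 𝓘(ℝ, F)) (fun x => TotalSpace.mk' F x (0 : E x)) p).toLinearMap = ⊤}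
      = (Prod.fst '' {q : (Fin d → ℝ) × X | ¬ P q})ᶜ := by
    ext c
    constructor
    · intro h hc
      obtain ⟨q, hq, rfl⟩ := hc
      exact hq (h q.2)
    · intro h p hp
      by_contra hcon
      exact h ⟨(c, p), fun h' => hcon (h' hp), rfl⟩
  rw [himage]
  have hclosed : IsClosed {q : (Fin d → ℝ) × X | ¬ P q} := by
    rw [show {q : (Fin d → ℝ) × X | ¬ P q} = {q | P q}ᶜ from (Set.compl_setOf _).symm]
    exact hPopen.isClosed_compl
  exact (isClosedMap_fst_of_compactSpace _ hclosed).isOpen_compl
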